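/- arXiv:2409.03689 — 3 statements merged into one kernel-verified Lean document; each statement's English description precedes it below -/
import Mathlib

section
/- (Dominance criterion for C_n.) Fix n ≥ 2 and work with the root system C_n: the coweight lattice is P^∨ = ℤ^n + ℤ·(1/2, …, 1/2) inside (1/2)ℤ^n, with simple coroots α_i^∨ = e_i − e_{i+1} for 1 ≤ i ≤ n−1 and α_n^∨ = e_n, so the coroot lattice is ℤ^n. Let r ≥ 0 be an integer, μ = (r/2, r/2, …, r/2), and let ν = (ν_1, …, ν_n) ∈ P^∨ with ν_1 ≥ ν_2 ≥ … ≥ ν_n ≥ 0 and μ − ν ∈ ℤ^n. Then μ − ν is a nonnegative integral combination of the simple coroots if and only if ν_1 ≤ r/2. -/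
/-- The simple coroots of the root system `C_n` in the standard coordinates on `ℚ^n`
(indexed from `0`): `α_i^∨ = e_i - e_{i+1}` for `i = 1, …, n-1`, and `α_n^∨ = e_n`. -/
def Ccoroot (n : ℕ) (i : Fin n) : Fin n → ℚ := fun j =>
  if (i : ℕ) + 1 < n then
    (if j = i then 1 else 0) + (if (j : ℕ) = (i : ℕ) + 1 then -1 else 0)
  else if j = i then 1 else 0

lemma Ccoroot_apply (n : ℕ) (i j : Fin n) :
    Ccoroot n i j = (if j = i then 1 else 0) + (if (j : ℕ) = (i : ℕ) + 1 then (-1:ℚ) else 0) := by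
  unfold Ccoroot
  by_cases h : (i : ℕ) + 1 < n
  · simp [h]
  · have hj : (j : ℕ) ≠ (i : ℕ) + 1 := by have := j.isLt; omega
    simp [h, hj]

lemma sum_eval (n : ℕ) (c : Fin n → ℚ) (j : Fin n) :
    (∑ i, c i • Ccoroot n i) j
      = c j - (if h : 1 ≤ (j : ℕ) then
          c ⟨(j : ℕ) - 1, Nat.lt_of_le_of_lt (Nat.sub_le _ _) j.isLt⟩ else 0) := by
  have h0 : (∑ i, c i • Ccoroot n i) j = ∑ i, c i * Ccoroot n i j := by
    simp [Finset.sum_apply]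
  rw [h0]
  simp only [Ccoroot_apply, mul_add]
  rw [Finset.sum_add_distrib]
  have h1 : ∑ i, c i * (if j = i then (1:ℚ) else 0) = c j := by
    simp [mul_ite]
  have h2 : ∑ i, c i * (if (j : ℕ) = (i : ℕ) + 1 then (-1:ℚ) else 0)
      = - (if h : 1 ≤ (j : ℕ) then
          c ⟨(j : ℕ) - 1, Nat.lt_of_le_of_lt (Nat.sub_le _ _) j.isLt⟩ else 0) := by
    by_cases hj : 1 ≤ (j : ℕ)
    · rw [dif_pos hj]
      set p : Fin n := ⟨(j : ℕ) - 1, Nat.lt_of_le_of_lt (Nat.sub_le _ _) j.isLt⟩ with hp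
      have hcond : ∀ i : Fin n, ((j : ℕ) = (i : ℕ) + 1) ↔ i = p := by
        intro i
        rw [Fin.ext_iff, hp]
        simp only []
        omega
      calc ∑ i, c i * (if (j : ℕ) = (i : ℕ) + 1 then (-1:ℚ) else 0)
          = ∑ i, (if i = p then -c i else 0) := by
            refine Finset.sum_congr rfl fun i _ => ?_
            rw [if_congr (hcond i) rfl rfl]
            split_ifs <;> ring
        _ = -c p := by simp
    · rw [dif_neg hj]
      have : ∀ i : Fin n, (j : ℕ) ≠ (i : ℕ) + 1 := by intro i; omega
      simp [this]
  rw [h1, h2]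
  ring

/-- **Dominance criterion for `C_n`.**  Let `μ = (r/2, …, r/2)` and let
`ν ∈ P^∨ = ℤ^n + ℤ·(1/2,…,1/2)` be dominant (`ν_1 ≥ … ≥ ν_n ≥ 0`) with `μ - ν ∈ ℤ^n`
(the coroot lattice).  Then `μ - ν` is a nonnegative integral combination of the simple
coroots if and only if `ν_1 ≤ r/2`. -/
theorem statement6 (n : ℕ) (hn : 2 ≤ n) (r : ℕ)
    (ν : Fin n → ℚ)
    (hcowt : ∃ (m : Fin n → ℤ) (t : ℤ), ∀ i, ν i = (m i : ℚ) + (t : ℚ) / 2)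
    (hdec : Antitone ν) (hnonneg : ∀ i, 0 ≤ ν i)
    (hlat : ∀ i, ∃ m : ℤ, (r : ℚ) / 2 - ν i = (m : ℚ)) :
    (∃ c : Fin n → ℕ,
        (fun _ : Fin n => (r : ℚ) / 2) - ν = ∑ i, (c i : ℚ) • Ccoroot n i) ↔
      ν ⟨0, by omega⟩ ≤ (r : ℚ) / 2 := by
  choose m hm using hlat
  constructor
  · rintro ⟨c, hc⟩
    have h0 := congrFun hc ⟨0, by omega⟩
    rw [Pi.sub_apply] at h0
    rw [show (∑ i, (c i : ℚ) • Ccoroot n i) = ∑ i, (fun k => (c k : ℚ)) i • Ccoroot n i from rfl,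
      sum_eval] at h0
    rw [dif_neg (by simp)] at h0
    have hcn : (0:ℚ) ≤ (c ⟨0, by omega⟩ : ℚ) := Nat.cast_nonneg _
    simp only [sub_zero] at h0
    linarith [h0]
  · intro hν
    have hm0 : ∀ i, 0 ≤ m i := by
      intro i
      have h1 : ν i ≤ ν ⟨0, by omega⟩ := hdec (by simp [Fin.le_def])
      have h2 : (0:ℚ) ≤ (m i : ℚ) := by rw [← hm i]; linarith
      exact_mod_cast h2
    set S : Fin n → ℤ := fun j => ∑ k : Fin n, if (k : ℕ) ≤ (j : ℕ) then m k else 0 with hS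
    have hSnonneg : ∀ j, 0 ≤ S j := fun j =>
      Finset.sum_nonneg fun k _ => by split_ifs; exacts [hm0 k, le_rfl]
    have hcast : ∀ j, (((S j).toNat : ℕ) : ℚ) = ((S j : ℤ) : ℚ) := by
      intro j
      exact_mod_cast congrArg (fun z : ℤ => (z : ℚ)) (Int.toNat_of_nonneg (hSnonneg j))
    refine ⟨fun j => (S j).toNat, ?_⟩
    funext j
    rw [Pi.sub_apply]
    rw [show (∑ i, ((((fun k => (S k).toNat) i : ℕ)) : ℚ) • Ccoroot n i)
        = ∑ i, (fun k => ((S k).toNat : ℚ)) i • Ccoroot n i from rfl, sum_eval]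
    by_cases hj : 1 ≤ (j : ℕ)
    · rw [dif_pos hj]
      set p : Fin n := ⟨(j : ℕ) - 1, Nat.lt_of_le_of_lt (Nat.sub_le _ _) j.isLt⟩ with hp
      have key : S j - S p = m j := by
        rw [hS]
        simp only []
        rw [← Finset.sum_sub_distrib]
        have hterm : ∀ k : Fin n,
            ((if (k : ℕ) ≤ (j : ℕ) then m k else 0) - (if (k : ℕ) ≤ (p : ℕ) then m k else 0))
              = if k = j then m k else 0 := by
          intro k
          have hpv : (p : ℕ) = (j : ℕ) - 1 := rfl
          by_cases h1 : k = j
          · subst h1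
            rw [if_pos le_rfl, if_neg (by omega), if_pos rfl]
            ring
          · have hkj : (k : ℕ) ≠ (j : ℕ) := fun h => h1 (Fin.ext h)
            rw [if_neg h1]
            by_cases h2 : (k : ℕ) ≤ (p : ℕ)
            · rw [if_pos (by omega), if_pos h2]; ring
            · rw [if_neg (by omega), if_neg h2]; ring
        calc (∑ k : Fin n, ((if (k : ℕ) ≤ (j : ℕ) then m k else 0) - (if (k : ℕ) ≤ (p : ℕ) then m k else 0)))
            = ∑ k, if k = j then m k else 0 := Finset.sum_congr rfl fun k _ => hterm k
          _ = m j := by simp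
      have : (r : ℚ) / 2 - ν j = (m j : ℚ) := hm j
      rw [this, hcast j, hcast p, ← key]
      push_cast
      ring
    · rw [dif_neg hj]
      have hj0 : (j : ℕ) = 0 := by omega
      have hjeq : j = ⟨0, by omega⟩ := Fin.ext hj0
      have hSj : S j = m j := by
        rw [hS]
        simp only []
        have hterm : ∀ k : Fin n, (if (k : ℕ) ≤ (j : ℕ) then m k else 0) = if k = j then m k else 0 := by
          intro k
          have : ((k : ℕ) ≤ (j : ℕ)) ↔ k = j := by
            rw [Fin.ext_iff]; omega
          rw [if_congr this rfl rfl]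
        calc (∑ k : Fin n, if (k : ℕ) ≤ (j : ℕ) then m k else 0)
            = ∑ k, if k = j then m k else 0 := Finset.sum_congr rfl fun k _ => hterm k
          _ = m j := by simp
      rw [sub_zero, hcast j, hSj, ← hm j]
end

section
/- Let K be a complete discretely valued field whose residue field is algebraically closed of characteristic p > 0. Let e ≥ 1 be an integer prime to p, π a uniformizer of K, and K̃ = K(π̃) with π̃^e = π; then K̃/K is a cyclic Galois totally ramified extension of degree e with group Γ. Let V be a finite-dimensional K-vector space and Λ̃ an 𝒪_{K̃}-lattice in V ⊗_K K̃ which is stable under the semilinear action of Γ. For 0 ≤ i ≤ e−1 set Λ_i = (π̃^i Λ̃)^Γ, an 𝒪_K-lattice in V. Then for every g ∈ GL_K(V), the K̃-linear extension g ⊗ 1 maps Λ̃ into itself (i.e. g ⊗ 1 ∈ GL(Λ̃)) if and only if g(Λ_i) = Λ_i for all 0 ≤ i ≤ e−1. -/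
/-!
Since the residue field is algebraically closed and `e` is prime to `p`, Hensel's lemma gives a
primitive `e`-th root of unity `ζ ∈ 𝒪_K`; as `X ^ e - π` is Eisenstein, there is `γ ∈ Γ` with
`γ π̃ = ζ π̃`. The operators `P_i = e⁻¹ ∑_j ζ^(-ij) γ^j` have coefficients in `𝒪_K`, so they
preserve `Λ̃`; they sum to the identity, and since `W = ∑_{m<e} π̃^m V` with `γ` acting on
`π̃^m V` by `ζ^m`, `P_i` maps `W` into `π̃^i V`. Hence `Λ̃ = ⊕_i π̃^i M_i` with
`M_i = {v | π̃^i v ∈ Λ̃}`, and `M_0 = Λ_0`, `M_i = π⁻¹ Λ_(e-i)` for `0 < i < e`. So `g ⊗ 1`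
preserves `Λ̃` iff `g` preserves every `Λ_i`; applying this to `g` and `g⁻¹` gives the claim.
-/

open IsLocalRing Polynomial Set
open scoped Pointwise

theorem CharP.natCast_ne_zero_of_coprime (R : Type*) [Ring R] [Nontrivial R] {p : ℕ} [CharP R p]
    {n : ℕ} (h : n.Coprime p) : (n : R) ≠ 0 :=
  (letI := invertibleOfCoprime (R := R) h; isUnit_of_invertible (n : R)).ne_zero

theorem HenselianRing.exists_isPrimitiveRoot_residue_eq {A : Type*} [CommRing A] [IsLocalRing A]
    [HenselianRing A (maximalIdeal A)] {e : ℕ} [NeZero e] {ζ₀ : ResidueField A}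
    (hζ₀ : IsPrimitiveRoot ζ₀ e) : ∃ ζ : A, IsPrimitiveRoot ζ e ∧ residue A ζ = ζ₀ := by
  obtain ⟨a₀, rfl⟩ := residue_surjective ζ₀
  have he : (e : ResidueField A) ≠ 0 := hζ₀.neZero'.out
  obtain ⟨ζ, hroot, hlift⟩ := HenselianRing.is_henselian (I := maximalIdeal A) (X ^ e - 1)
    (monic_X_pow_sub_C 1 (NeZero.ne e)) a₀
    (by rw [← residue_eq_zero_iff]; simp [hζ₀.pow_eq_one])
    (by
      refine Ne.isUnit (show residue A _ ≠ 0 from ?_)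
      simp only [derivative_sub, derivative_X_pow, derivative_one, sub_zero, eval_mul,
        eval_natCast, eval_pow, eval_X, map_mul, map_pow, map_natCast]
      exact mul_ne_zero he (pow_ne_zero _ (hζ₀.ne_zero (NeZero.ne e))))
  have hres : residue A ζ = residue A a₀ := by
    rwa [← sub_eq_zero, ← map_sub, residue_eq_zero_iff]
  refine ⟨ζ, ⟨by simpa [sub_eq_zero] using hroot, fun l hl => hζ₀.dvd_of_pow_eq_one l ?_⟩, hres⟩
  rw [← hres, ← map_pow, hl, map_one]

theorem HenselianRing.exists_isPrimitiveRoot_of_coprime {A : Type*} [CommRing A]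
    [IsLocalRing A] [HenselianRing A (maximalIdeal A)] [IsSepClosed (ResidueField A)] {p e : ℕ}
    [CharP (ResidueField A) p] (h : e.Coprime p) : ∃ ζ : A, IsPrimitiveRoot ζ e := by
  have : NeZero (e : ResidueField A) := ⟨CharP.natCast_ne_zero_of_coprime _ h⟩
  have : NeZero e := .of_neZero_natCast (ResidueField A)
  obtain ⟨ζ₀, hζ₀⟩ := HasEnoughRootsOfUnity.exists_primitiveRoot (ResidueField A) e
  obtain ⟨ζ, hζ, -⟩ := exists_isPrimitiveRoot_residue_eq hζ₀
  exact ⟨ζ, hζ⟩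

theorem IsLocalRing.isUnit_natCast_of_coprime {A : Type*} [CommRing A] [IsLocalRing A] {p n : ℕ}
    [CharP (ResidueField A) p] (h : n.Coprime p) : IsUnit (n : A) :=
  (residue_ne_zero_iff_isUnit _).mp (by simpa using CharP.natCast_ne_zero_of_coprime _ h)

theorem Prime.irreducible_X_pow_sub_C_algebraMap {A : Type*} (K : Type*) [CommRing A]
    [IsDomain A] [IsIntegrallyClosed A] [Field K] [Algebra A K] [IsFractionRing A K] {π : A}
    (hπ : Prime π) {e : ℕ} (he : e ≠ 0) : Irreducible (X ^ e - C (algebraMap A K π)) := by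
  have hmonic : (X ^ e - C π).Monic := monic_X_pow_sub_C π he
  have hdeg : (X ^ e - C π).natDegree = e := natDegree_X_pow_sub_C
  have hEis : (X ^ e - C π).IsEisensteinAt (Ideal.span {π}) := by
    refine hmonic.isEisensteinAt_of_mem_of_notMem (Ideal.span_singleton_ne_top hπ.not_isUnit)
      (fun {n} hn => ?_) ?_
    · rw [hdeg] at hn
      rcases eq_or_ne n 0 with rfl | hn0
      · simp [he.symm]
      · simp [coeff_X_pow, coeff_C, hn.ne, hn0]
    · have h21 : ¬ π ^ 2 ∣ π ^ 1 := fun h =>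
        absurd ((pow_dvd_pow_iff hπ.ne_zero hπ.not_isUnit).mp h) (by norm_num)
      simpa [Ideal.span_singleton_pow, Ideal.mem_span_singleton, he.symm] using h21
  have hirr := hEis.irreducible ((Ideal.span_singleton_prime hπ.ne_zero).mpr hπ)
    hmonic.isPrimitive (by omega)
  simpa using hmonic.irreducible_iff_irreducible_map_fraction_map (K := K) |>.mp hirr

section Kummer

variable {K L : Type*} [Field K] [Field L] [Algebra K L] {e : ℕ} {a : K} {α : L}

theorem minpoly_eq_X_pow_sub_C (hα : α ^ e = algebraMap K L a)
    (hirr : Irreducible (X ^ e - C a)) : minpoly K α = X ^ e - C a :=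
  (minpoly.eq_of_irreducible_of_monic hirr (by simp [hα])
    (monic_X_pow_sub_C a (ne_zero_of_irreducible_X_pow_sub_C hirr))).symm

theorem isIntegral_of_pow_eq_algebraMap (he : e ≠ 0) (hα : α ^ e = algebraMap K L a) :
    IsIntegral K α :=
  ⟨X ^ e - C a, monic_X_pow_sub_C a he, by simp [hα]⟩

theorem span_range_pow_eq_top (hα : α ^ e = algebraMap K L a)
    (hirr : Irreducible (X ^ e - C a)) (hgen : Algebra.adjoin K {α} = ⊤) :
    Submodule.span K (range fun m : Fin e => α ^ (m : ℕ)) = ⊤ := by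
  let pb := PowerBasis.ofAdjoinEqTop
    (isIntegral_of_pow_eq_algebraMap (ne_zero_of_irreducible_X_pow_sub_C hirr) hα) hgen
  have hdim : pb.dim = e := by
    simp [pb, minpoly_eq_X_pow_sub_C hα hirr]
  have hspan := pb.basis.span_eq
  rwa [pb.coe_basis, PowerBasis.ofAdjoinEqTop_gen, hdim] at hspan

theorem exists_algEquiv_apply_eq_mul (hα : α ^ e = algebraMap K L a)
    (hirr : Irreducible (X ^ e - C a)) (hgen : Algebra.adjoin K {α} = ⊤) {ζ : K}
    (hζ : ζ ^ e = 1) : ∃ γ : L ≃ₐ[K] L, γ α = algebraMap K L ζ * α := by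
  let pb := PowerBasis.ofAdjoinEqTop
    (isIntegral_of_pow_eq_algebraMap (ne_zero_of_irreducible_X_pow_sub_C hirr) hα) hgen
  have : Module.Finite K L := pb.finite
  have hroot : aeval (algebraMap K L ζ * α) (minpoly K pb.gen) = 0 := by
    rw [PowerBasis.ofAdjoinEqTop_gen, minpoly_eq_X_pow_sub_C hα hirr, map_sub, map_pow, aeval_X,
      aeval_C, mul_pow, ← map_pow, hζ, map_one, one_mul, hα, sub_self]
  let γ := pb.lift _ hroot
  refine ⟨AlgEquiv.ofBijective γ (Algebra.IsAlgebraic.algHom_bijective γ), ?_⟩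
  simpa [pb] using pb.lift_gen _ hroot

end Kummer

theorem geom_sum_eq_ite_of_pow_eq_one {K : Type*} [Field K] [DecidableEq K] {ρ : K} {e : ℕ}
    (h : ρ ^ e = 1) : ∑ j ∈ Finset.range e, ρ ^ j = if ρ = 1 then (e : K) else 0 := by
  split_ifs with hρ
  · simp [hρ]
  · rw [geom_sum_eq hρ, h, sub_self, zero_div]

section EigenProjection

open Finset

variable {K W : Type*} [Field K] [AddCommGroup W] [Module K W]

noncomputable def eigenProjection (T : Module.End K W) (ζ : K) (e i : ℕ) : Module.End K W :=
  ∑ j ∈ range e, ((e : K)⁻¹ * ζ⁻¹ ^ (i * j)) • T ^ j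

variable {T : Module.End K W} {ζ : K} {e : ℕ}

theorem sum_eigenProjection (hζ : IsPrimitiveRoot ζ e) [NeZero e] :
    ∑ i ∈ range e, eigenProjection T ζ e i = 1 := by
  classical
  have he : (e : K) ≠ 0 := hζ.neZero'.out
  have horth : ∀ j ∈ range e, ∑ i ∈ range e, ((e : K)⁻¹ * ζ⁻¹ ^ (i * j)) • T ^ j =
      if j = 0 then 1 else 0 := by
    intro j hj
    have hpow : ∀ i, ζ⁻¹ ^ (i * j) = (ζ⁻¹ ^ j) ^ i := fun i => by rw [← pow_mul, mul_comm]
    have hone : ζ⁻¹ ^ j = 1 ↔ j = 0 := by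
      rw [hζ.inv.pow_eq_one_iff_dvd]
      exact ⟨fun h => Nat.eq_zero_of_dvd_of_lt h (mem_range.mp hj), fun h => h ▸ dvd_zero e⟩
    have hroot : (ζ⁻¹ ^ j) ^ e = 1 := by
      rw [← pow_mul, mul_comm, pow_mul, hζ.inv.pow_eq_one, one_pow]
    simp_rw [← sum_smul, ← mul_sum, hpow, geom_sum_eq_ite_of_pow_eq_one hroot, hone]
    split_ifs with hj0
    · simp [hj0, he]
    · simp
  simp only [eigenProjection]
  rw [sum_comm, sum_congr rfl horth, sum_ite_eq' (range e) 0,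
    if_pos (mem_range.mpr (Nat.pos_of_ne_zero (NeZero.ne e)))]

theorem eigenProjection_apply_of_apply_eq_smul [DecidableEq K] (hζ : ζ ^ e = 1)
    (he : (e : K) ≠ 0) {μ : K} (hμ : μ ^ e = 1) {x : W} (hx : T x = μ • x) (i : ℕ) :
    eigenProjection T ζ e i x = if μ = ζ ^ i then x else 0 := by
  have hζ0 : ζ ≠ 0 := by
    rintro rfl
    rw [zero_pow (by rintro rfl; exact he Nat.cast_zero)] at hζ
    exact zero_ne_one hζ
  have hTpow : ∀ j, (T ^ j) x = μ ^ j • x := fun j => by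
    induction j with
    | zero => simp
    | succ j ih => rw [pow_succ', Module.End.mul_apply, ih, map_smul, hx, smul_smul, pow_succ]
  have hρ : (μ * ζ⁻¹ ^ i) ^ e = 1 := by
    rw [mul_pow, ← pow_mul, mul_comm i, pow_mul, inv_pow, hζ, hμ, inv_one, one_pow, one_mul]
  have hρone : μ * ζ⁻¹ ^ i = 1 ↔ μ = ζ ^ i := by
    rw [inv_pow, mul_inv_eq_one₀ (pow_ne_zero i hζ0)]
  have hsum : eigenProjection T ζ e i x = ((e : K)⁻¹ * ∑ j ∈ range e, (μ * ζ⁻¹ ^ i) ^ j) • x := by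
    simp only [eigenProjection, LinearMap.sum_apply, LinearMap.smul_apply, hTpow, smul_smul,
      mul_sum, ← sum_smul]
    congr 1
    refine sum_congr rfl fun j _ => ?_
    ring
  rw [hsum, geom_sum_eq_ite_of_pow_eq_one hρ]
  simp only [hρone]
  split_ifs <;> simp [he]

theorem eigenProjection_mem {R : Submonoid K} {S : AddSubmonoid W}
    (hS : ∀ c ∈ R, ∀ w ∈ S, c • w ∈ S) (he : (e : K)⁻¹ ∈ R) (hζ : ζ⁻¹ ∈ R)
    (hT : ∀ w ∈ S, T w ∈ S) (i : ℕ) {w : W} (hw : w ∈ S) : eigenProjection T ζ e i w ∈ S := by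
  have hTpow : ∀ j, (T ^ j) w ∈ S := fun j => by
    induction j with
    | zero => simpa using hw
    | succ j ih => rw [pow_succ', Module.End.mul_apply]; exact hT _ ih
  simp only [eigenProjection, LinearMap.sum_apply, LinearMap.smul_apply]
  exact sum_mem fun j _ => hS _ (R.mul_mem he (R.pow_mem hζ _)) _ (hTpow j)

end EigenProjection

theorem inv_mem_mrange_of_isUnit {M N F : Type*} [Monoid M] [DivisionMonoid N] [FunLike F M N]
    [MonoidHomClass F M N] (f : F) {a : M} (ha : IsUnit a) : (f a)⁻¹ ∈ MonoidHom.mrange f :=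
  ⟨↑ha.unit⁻¹, by rw [map_units_inv, IsUnit.unit_spec]⟩

theorem Submodule.algebraMap_smul_mem {A K K' W : Type*} [CommRing A] [CommRing K] [CommRing K']
    [Algebra A K] [Algebra K K'] [Algebra A K'] [IsScalarTower A K K'] [AddCommGroup W]
    [Module K' W] [Module K W] [IsScalarTower K K' W] {B : Subalgebra A K'} (Λ : Submodule B W)
    (a : A) {w : W} (hw : w ∈ Λ) : algebraMap A K a • w ∈ Λ := by
  have h : algebraMap A K a • w = algebraMap A B a • w := by
    rw [← algebraMap_smul K' (algebraMap A K a) w, ← IsScalarTower.algebraMap_apply]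
    rfl
  exact h ▸ Λ.smul_mem _ hw

theorem Module.Finite.of_span_range_eq_top {R S M N : Type*} [CommSemiring R] [Semiring S]
    [Algebra R S] [AddCommMonoid M] [Module R M] [AddCommMonoid N] [Module S N] [Module R N]
    [IsScalarTower R S N] [Module.Finite R M] (f : M →ₗ[R] N)
    (h : Submodule.span S (Set.range f) = ⊤) : Module.Finite S N := by
  classical
  obtain ⟨s, hs⟩ := Module.Finite.fg_top (R := R) (M := M)
  refine ⟨⟨s.image f, ?_⟩⟩
  rw [Finset.coe_image, ← Submodule.span_span_of_tower R, ← Submodule.map_span, hs,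
    Submodule.map_top, LinearMap.coe_range, h]

theorem Set.image_eq_self_iff_mapsTo {α : Type*} {f f' : α → α} (h₁ : ∀ x, f' (f x) = x)
    (h₂ : ∀ x, f (f' x) = x) (s : Set α) : f '' s = s ↔ MapsTo f s s ∧ MapsTo f' s s := by
  rw [image_eq_iff_surjOn_mapsTo, and_comm, SurjOn, image_eq_preimage_of_inverse h₁ h₂]
  rfl

theorem Set.setOf_exists_mem_eq_smul {V W M : Type*} [SMul M W] (f : V → W) (S : Set W) (c : M) :
    {v | ∃ w ∈ S, f v = c • w} = f ⁻¹' (c • S) := by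
  ext v
  simp [mem_smul_set, eq_comm]

theorem mapsTo_preimage_smul_of_mapsTo {K K' V W : Type*} [Semiring K] [Semiring K']
    [AddCommMonoid V] [Module K V] [AddCommMonoid W] [Module K W] [Module K' W]
    {ι : V →ₗ[K] W} {g : V →ₗ[K] V} {G : W →ₗ[K'] W} (hG : ∀ v, G (ι v) = ι (g v)) {S : Set W}
    (hGS : MapsTo G S S) (c : K') : MapsTo g (ι ⁻¹' (c • S)) (ι ⁻¹' (c • S)) := by
  rintro v ⟨w, hw, hv : c • w = ι v⟩
  exact ⟨G w, hGS hw, show c • G w = ι (g v) by rw [← map_smul, hv, hG]⟩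

section Descent

variable {K K' V W : Type*} [Field K] [Field K'] [Algebra K K'] [AddCommGroup V] [Module K V]
  [AddCommGroup W] [Module K' W] [Module K W] [IsScalarTower K K' W]

def AddMonoidHom.toLinearMapOfSemilinear (γ : K' ≃ₐ[K] K') (f : W →+ W)
    (hf : ∀ (a : K') (w : W), f (a • w) = γ a • f w) : Module.End K W where
  toFun := f
  map_add' := f.map_add
  map_smul' c w := by
    rw [RingHom.id_apply, ← algebraMap_smul K' c w, hf, AlgEquiv.commutes, algebraMap_smul]

theorem bijective_of_apply_eq_apply_linearEquiv [Module.Finite K V] {ι : V →ₗ[K] W}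
    (hspan : Submodule.span K' (range ι) = ⊤) {g : V ≃ₗ[K] V} {G : W →ₗ[K'] W}
    (hG : ∀ v, G (ι v) = ι (g v)) : Function.Bijective G := by
  have : Module.Finite K' W := .of_span_range_eq_top ι hspan
  have hsurj : Function.Surjective G := by
    rw [← LinearMap.range_eq_top, eq_top_iff, ← hspan, Submodule.span_le]
    rintro _ ⟨v, rfl⟩
    exact ⟨ι (g.symm v), by rw [hG, g.apply_symm_apply]⟩
  exact ⟨LinearMap.injective_iff_surjective.mpr hsurj, hsurj⟩

theorem image_eq_self_iff_of_mapsTo_iff [Module.Finite K V] {ι : V →ₗ[K] W}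
    (hspan : Submodule.span K' (range ι) = ⊤) {S : Set W} {e : ℕ} {L : ℕ → Set V}
    (hL : ∀ (g : V ≃ₗ[K] V) (G : W →ₗ[K'] W), (∀ v, G (ι v) = ι (g v)) →
      (MapsTo G S S ↔ ∀ i < e, MapsTo g (L i) (L i)))
    {g : V ≃ₗ[K] V} {G : W →ₗ[K'] W} (hG : ∀ v, G (ι v) = ι (g v)) :
    G '' S = S ↔ ∀ i < e, g '' L i = L i := by
  let Gₑ := LinearEquiv.ofBijective G (bijective_of_apply_eq_apply_linearEquiv hspan hG)
  have hGₑ : ∀ v, Gₑ.symm (ι v) = ι (g.symm v) := fun v =>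
    Gₑ.symm_apply_eq.mpr (by simp [Gₑ, hG])
  rw [image_eq_self_iff_mapsTo (f := G) (f' := (Gₑ.symm : W →ₗ[K'] W)) Gₑ.symm_apply_apply
    Gₑ.apply_symm_apply, hL g G hG, hL g.symm _ hGₑ, ← forall₂_and]
  exact forall₂_congr fun i _ =>
    (image_eq_self_iff_mapsTo g.symm_apply_apply g.apply_symm_apply _).symm

theorem mapsTo_setOf_smul_mem_of_mapsTo_preimage_smul {ι : V →ₗ[K] W} {g : V →ₗ[K] V}
    {S : Set W} {a b : K'} {t : K} (ha : a ≠ 0) (hab : a * b = algebraMap K K' t)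
    (hg : MapsTo g (ι ⁻¹' (a • S)) (ι ⁻¹' (a • S))) :
    MapsTo g {v | b • ι v ∈ S} {v | b • ι v ∈ S} := by
  intro v hv
  have hsmul : ∀ u : V, ι (t • u) = a • b • ι u := fun u => by
    rw [map_smul, ← algebraMap_smul K' t, ← hab, mul_smul]
  obtain ⟨w, hw, hgw⟩ := hg (show t • v ∈ ι ⁻¹' (a • S) from ⟨_, hv, (hsmul v).symm⟩)
  rw [map_smul, hsmul] at hgw
  rwa [mem_ofPred_eq, ← smul_right_injective W ha hgw]

theorem exists_eigenProjection_apply_eq_smul {ι : V →ₗ[K] W}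
    (hspan : Submodule.span K' (range ι) = ⊤) {π' : K'} {e : ℕ}
    (hKspan : Submodule.span K (range fun m : Fin e => π' ^ (m : ℕ)) = ⊤) {ζ : K}
    (hζ : IsPrimitiveRoot ζ e) {γ : K' ≃ₐ[K] K'} (hγ : γ π' = algebraMap K K' ζ * π')
    {T : Module.End K W} (hT : ∀ (a : K') (v : V), T (a • ι v) = γ a • ι v) {i : ℕ} (hi : i < e)
    (w : W) : ∃ v, eigenProjection T ζ e i w = π' ^ i • ι v := by
  classical
  have : NeZero e := ⟨by omega⟩
  have hW : Submodule.span K ((range fun m : Fin e => π' ^ (m : ℕ)) • range ι) = ⊤ := by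
    rw [Submodule.span_smul_of_span_eq_top hKspan, hspan, Submodule.restrictScalars_top]
  suffices ⊤ ≤ (LinearMap.range ((π' ^ i) • ι)).comap (eigenProjection T ζ e i) by
    obtain ⟨v, hv⟩ := this (Submodule.mem_top (x := w))
    exact ⟨v, hv.symm⟩
  rw [← hW, Submodule.span_le]
  rintro _ ⟨_, ⟨m, rfl⟩, _, ⟨v, rfl⟩, rfl⟩
  have hx : T (π' ^ (m : ℕ) • ι v) = ζ ^ (m : ℕ) • π' ^ (m : ℕ) • ι v := by
    rw [hT, map_pow, hγ, mul_pow, ← map_pow, mul_smul, algebraMap_smul]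
  have hμ : (ζ ^ (m : ℕ)) ^ e = 1 := by rw [← pow_mul, mul_comm, pow_mul, hζ.pow_eq_one, one_pow]
  rw [SetLike.mem_coe, Submodule.mem_comap, eigenProjection_apply_of_apply_eq_smul hζ.pow_eq_one
    hζ.neZero'.out hμ hx]
  split_ifs with h
  · rw [hζ.pow_inj m.2 hi h]
    exact ⟨v, rfl⟩
  · exact zero_mem _

theorem mapsTo_of_forall_mapsTo_preimage_smul {ι : V →ₗ[K] W}
    (hspan : Submodule.span K' (range ι) = ⊤) {π' : K'} (hπ' : π' ≠ 0) {e : ℕ} [NeZero e]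
    {t : K} (ht : π' ^ e = algebraMap K K' t)
    (hKspan : Submodule.span K (range fun m : Fin e => π' ^ (m : ℕ)) = ⊤) {ζ : K}
    (hζ : IsPrimitiveRoot ζ e) {γ : K' ≃ₐ[K] K'} (hγ : γ π' = algebraMap K K' ζ * π')
    {T : Module.End K W} (hT : ∀ (a : K') (v : V), T (a • ι v) = γ a • ι v)
    {R : Submonoid K} {S : AddSubmonoid W} (hS : ∀ c ∈ R, ∀ w ∈ S, c • w ∈ S)
    (heR : (e : K)⁻¹ ∈ R) (hζR : ζ⁻¹ ∈ R) (hTS : ∀ w ∈ S, T w ∈ S)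
    {g : V →ₗ[K] V} {G : W →ₗ[K'] W} (hG : ∀ v, G (ι v) = ι (g v))
    (hg : ∀ i < e, MapsTo g (ι ⁻¹' (π' ^ i • (S : Set W))) (ι ⁻¹' (π' ^ i • (S : Set W)))) :
    MapsTo G S S := by
  intro w hw
  rw [← Module.End.one_apply (R := K) w, ← sum_eigenProjection (T := T) hζ, LinearMap.sum_apply,
    map_sum]
  refine sum_mem fun i hi => ?_
  have hi := Finset.mem_range.mp hi
  obtain ⟨v, hv⟩ := exists_eigenProjection_apply_eq_smul hspan hKspan hζ hγ hT hi w
  have hvS : π' ^ i • ι v ∈ S := hv ▸ eigenProjection_mem hS heR hζR hTS i hw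
  -- `{v | π' ^ i • ι v ∈ S}` is `(π' ^ j * π' ^ i)⁻¹ • ι ⁻¹' (π' ^ j • S)`, with `j = 0` or `e - i`
  obtain ⟨j, hj, s, hs⟩ : ∃ j < e, ∃ s : K, π' ^ j * π' ^ i = algebraMap K K' s := by
    rcases Nat.eq_zero_or_pos i with rfl | hi0
    · exact ⟨0, Nat.pos_of_ne_zero (NeZero.ne e), 1, by simp⟩
    · exact ⟨e - i, by omega, t, by rw [← pow_add, Nat.sub_add_cancel hi.le, ht]⟩
  rw [hv, map_smul, hG]
  exact mapsTo_setOf_smul_mem_of_mapsTo_preimage_smul (pow_ne_zero j hπ') hs (hg j hj) hvS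

end Descent

theorem statement12_general
    (p : ℕ)
    -- `A = 𝒪_K`, a complete discrete valuation ring ...
    (A : Type*) [CommRing A] [IsDomain A] [IsDiscreteValuationRing A]
    (hcomplete : IsAdicComplete (IsLocalRing.maximalIdeal A) A)
    -- ... whose residue field is algebraically closed of characteristic `p`
    (hres : IsAlgClosed (IsLocalRing.ResidueField A))
    (hchar : CharP (IsLocalRing.ResidueField A) p)
    -- `K = Frac(A)`
    (K : Type*) [Field K] [Algebra A K] [IsFractionRing A K]
    -- `e ≥ 1` prime to `p`, `π` a uniformizer of `K`
    (e : ℕ) (hep : Nat.Coprime e p)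
    (π : A) (hπ : Irreducible π)
    -- `K̃ = K(π̃)` with `π̃^e = π`
    (K' : Type*) [Field K'] [Algebra K K'] [Algebra A K'] [IsScalarTower A K K']
    (π' : K') (hπ' : π' ^ e = algebraMap K K' (algebraMap A K π))
    (hgen : Algebra.adjoin K {π'} = ⊤)
    -- a finite-dimensional `K`-vector space `V`
    (V : Type*) [AddCommGroup V] [Module K V] [FiniteDimensional K V]
    -- `W = V ⊗_K K̃` with the embedding `ι : V = V ⊗ 1 → W`
    (W : Type*) [AddCommGroup W] [Module K' W] [Module K W] [IsScalarTower K K' W]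
    (ι : V →ₗ[K] W)
    (hspan : Submodule.span K' (Set.range ι) = ⊤)
    -- the semilinear action of `Γ = Gal(K̃/K)` on `W = V ⊗_K K̃` through the second
    -- factor: it fixes `ι(V)` pointwise
    (σ : (K' ≃ₐ[K] K') → W ≃+ W)
    (hσ_semilinear : ∀ γ (a : K') (w : W), σ γ (a • w) = γ a • σ γ w)
    (hσ_fix : ∀ γ (v : V), σ γ (ι v) = ι v)
    -- `Λ̃`: a `Γ`-stable `𝒪_{K̃}`-lattice in `W`
    (Λ : Submodule (integralClosure A K') W)
    (hΛstable : ∀ γ, ∀ w ∈ Λ, σ γ w ∈ Λ)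
    -- `g ∈ GL_K(V)` and its `K̃`-linear extension `G = g ⊗ 1` to `W`
    (g : V ≃ₗ[K] V) (G : W →ₗ[K'] W) (hG : ∀ v, G (ι v) = ι (g v)) :
    (G '' (Λ : Set W) = (Λ : Set W)) ↔
      ∀ i : ℕ, i < e →
        (fun v => g v) '' {v : V | ∃ w ∈ Λ, ι v = π' ^ i • w}
          = {v : V | ∃ w ∈ Λ, ι v = π' ^ i • w} := by
  have := hcomplete
  have := hres
  have heA : IsUnit (e : A) := isUnit_natCast_of_coprime (A := A) hep
  have : NeZero e := ⟨by rintro rfl; exact heA.ne_zero Nat.cast_zero⟩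
  obtain ⟨ζA, hζA⟩ := HenselianRing.exists_isPrimitiveRoot_of_coprime (A := A) hep
  have hζ := hζA.map_of_injective (IsFractionRing.injective A K)
  have hirr := hπ.prime.irreducible_X_pow_sub_C_algebraMap K (NeZero.ne e)
  obtain ⟨γ, hγ⟩ := exists_algEquiv_apply_eq_mul hπ' hirr hgen hζ.pow_eq_one
  have hπ'0 : π' ≠ 0 := ne_zero_pow (NeZero.ne e) (by simpa [hπ'] using hπ.ne_zero)
  have hS : ∀ c ∈ MonoidHom.mrange (algebraMap A K), ∀ w ∈ Λ, c • w ∈ Λ := by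
    rintro _ ⟨a, rfl⟩ w hw
    exact Λ.algebraMap_smul_mem a hw
  let T := (σ γ).toAddMonoidHom.toLinearMapOfSemilinear γ (hσ_semilinear γ)
  have hT : ∀ (a : K') (v : V), T (a • ι v) = γ a • ι v := fun a v =>
    (hσ_semilinear γ a (ι v)).trans (by rw [hσ_fix])
  have heR : (e : K)⁻¹ ∈ MonoidHom.mrange (algebraMap A K) := by
    simpa using inv_mem_mrange_of_isUnit (algebraMap A K) heA
  simp only [← SetLike.mem_coe, setOf_exists_mem_eq_smul]
  refine image_eq_self_iff_of_mapsTo_iff hspan (fun g G hG => ⟨fun hGΛ _ _ =>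
    mapsTo_preimage_smul_of_mapsTo hG hGΛ _, fun hg => ?_⟩) hG
  exact mapsTo_of_forall_mapsTo_preimage_smul (S := Λ.toAddSubmonoid) hspan hπ'0 hπ'
    (span_range_pow_eq_top hπ' hirr hgen) hζ hγ hT hS heR
    (inv_mem_mrange_of_isUnit _ (hζA.isUnit (NeZero.ne e))) (hΛstable γ) hG hg

/-- Let `K` be a complete discretely valued field (fraction field of a complete DVR
`A = 𝒪_K`) whose residue field is algebraically closed of characteristic `p > 0`.
Let `e ≥ 1` be prime to `p`, `π` a uniformizer of `K`, and `K̃ = K(π̃)` with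
`π̃^e = π`.  Let `V` be a finite-dimensional `K`-vector space, realize
`V ⊗_K K̃` as a `K̃`-vector space `W` with a `K`-embedding `ι : V → W` spanning `W`
over `K̃`, carrying the semilinear action `σ` of `Γ = Gal(K̃/K)` fixing `ι(V)`, and let
`Λ̃ ⊆ W` be a `Γ`-stable `𝒪_{K̃}`-lattice (`𝒪_{K̃}` the integral closure of `A` in
`K̃`).  For `0 ≤ i ≤ e-1` set `Λ_i = (π̃^i Λ̃)^Γ = {v ∈ V : ι v ∈ π̃^i Λ̃}`, an
`𝒪_K`-lattice in `V`.  Then for every `g ∈ GL_K(V)`, the `K̃`-linear extension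
`g ⊗ 1` maps `Λ̃` into itself (i.e. `g ⊗ 1 ∈ GL(Λ̃)`) if and only if `g(Λ_i) = Λ_i`
for all `0 ≤ i ≤ e-1`. -/
theorem statement12
    (p : ℕ) (hp : 0 < p)
    -- `A = 𝒪_K`, a complete discrete valuation ring ...
    (A : Type*) [CommRing A] [IsDomain A] [IsDiscreteValuationRing A]
    (hcomplete : IsAdicComplete (IsLocalRing.maximalIdeal A) A)
    -- ... whose residue field is algebraically closed of characteristic `p`
    (hres : IsAlgClosed (IsLocalRing.ResidueField A))
    (hchar : CharP (IsLocalRing.ResidueField A) p)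
    -- `K = Frac(A)`
    (K : Type*) [Field K] [Algebra A K] [IsFractionRing A K]
    -- `e ≥ 1` prime to `p`, `π` a uniformizer of `K`
    (e : ℕ) (he : 0 < e) (hep : Nat.Coprime e p)
    (π : A) (hπ : Irreducible π)
    -- `K̃ = K(π̃)` with `π̃^e = π`
    (K' : Type*) [Field K'] [Algebra K K'] [Algebra A K'] [IsScalarTower A K K']
    (π' : K') (hπ' : π' ^ e = algebraMap K K' (algebraMap A K π))
    (hgen : Algebra.adjoin K {π'} = ⊤)
    -- a finite-dimensional `K`-vector space `V`
    (V : Type*) [AddCommGroup V] [Module K V] [FiniteDimensional K V]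
    -- `W = V ⊗_K K̃` with the embedding `ι : V = V ⊗ 1 → W`
    (W : Type*) [AddCommGroup W] [Module K' W] [Module K W] [IsScalarTower K K' W]
    (ι : V →ₗ[K] W) (hι : Function.Injective ι)
    (hspan : Submodule.span K' (Set.range ι) = ⊤)
    -- the semilinear action of `Γ = Gal(K̃/K)` on `W = V ⊗_K K̃` through the second
    -- factor: it fixes `ι(V)` pointwise
    (σ : (K' ≃ₐ[K] K') → W ≃+ W)
    (hσ_semilinear : ∀ γ (a : K') (w : W), σ γ (a • w) = γ a • σ γ w)
    (hσ_mul : ∀ γ₁ γ₂ (w : W), σ (γ₁ * γ₂) w = σ γ₁ (σ γ₂ w))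
    (hσ_one : ∀ w : W, σ 1 w = w)
    (hσ_fix : ∀ γ (v : V), σ γ (ι v) = ι v)
    -- `Λ̃`: a `Γ`-stable `𝒪_{K̃}`-lattice in `W`
    (Λ : Submodule (integralClosure A K') W)
    (hΛfg : Λ.FG)
    (hΛspan : Submodule.span K' (Λ : Set W) = ⊤)
    (hΛstable : ∀ γ, ∀ w ∈ Λ, σ γ w ∈ Λ)
    -- `g ∈ GL_K(V)` and its `K̃`-linear extension `G = g ⊗ 1` to `W`
    (g : V ≃ₗ[K] V) (G : W →ₗ[K'] W) (hG : ∀ v, G (ι v) = ι (g v)) :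
    (G '' (Λ : Set W) = (Λ : Set W)) ↔
      ∀ i : ℕ, i < e →
        (fun v => g v) '' {v : V | ∃ w ∈ Λ, ι v = π' ^ i • w}
          = {v : V | ∃ w ∈ Λ, ι v = π' ^ i • w} :=
  statement12_general p A hcomplete hres hchar K e hep π hπ K' π' hπ' hgen V W ι hspan σ
    hσ_semilinear hσ_fix Λ hΛstable g G hG
end

section
/- Let R be a commutative ring in which 2 is invertible, let 𝒢 be a smooth affine group scheme over R, let c : 𝒢 → 𝔾_{m,R} be a homomorphism of group schemes over R, and suppose there exists a group scheme homomorphism d : 𝔾_{m,R} → 𝒢 with c ∘ d equal to the squaring homomorphism λ ↦ λ² of 𝔾_{m,R}. Then c is a smooth morphism. (In the paper this is applied with R = ℤ_p, p > 2, 𝒢 a smooth closed subgroup scheme of the symplectic similitude group GSp(Λ) of a self-dual symplectic ℤ_p-lattice Λ containing the central scalar torus 𝔾_m, and c the symplectic similitude character, for which c(diag(λ)) = λ².) -/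
open TensorProduct

/-- The comultiplication of the Hopf algebra `R[t,t⁻¹] = R[ℤ]`, the coordinate ring of
`𝔾_{m,R}`: it is determined by `t^n ↦ t^n ⊗ t^n`. -/
noncomputable def comulGm (R : Type*) [CommRing R] (x : AddMonoidAlgebra R ℤ) :
    TensorProduct R (AddMonoidAlgebra R ℤ) (AddMonoidAlgebra R ℤ) :=
  Finsupp.sum x.coeff fun n r =>
    r • (AddMonoidAlgebra.single n (1 : R) ⊗ₜ[R] AddMonoidAlgebra.single n (1 : R))

/-- The counit of the Hopf algebra `R[t,t⁻¹]`: it is determined by `t^n ↦ 1`. -/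
noncomputable def counitGm (R : Type*) [CommRing R] (x : AddMonoidAlgebra R ℤ) : R :=
  Finsupp.sum x.coeff fun _ r => r

/-!
Points of `𝒢` with values in a ring `B` are `R`-algebra maps `H → B`, multiplied by convolution.
Let `I ⊆ B` be a square-zero ideal, `u ∈ 𝔾_m(B)` and `g ∈ 𝒢(B/I)` with `c(g) = ū`. Smoothness of
`𝒢` lifts `g` to some `f ∈ 𝒢(B)`, and then `u / c(f) ∈ 1 + I`. As `2` is invertible and `I² = 0`, this is
a square `s²` with `s ∈ 1 + I`, so `d(s)` reduces to the identity and `c(f · d(s)) = c(f) · s² = u`: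
the point `f · d(s)` is a lift of `g` over `𝔾_m`.
-/

open LaurentPolynomial WithConv Coalgebra

namespace LaurentPolynomial

variable {R S : Type*} [CommRing R] [CommRing S] [Algebra R S]

noncomputable def aevalUnit (u : Sˣ) : R[T;T⁻¹] →ₐ[R] S :=
  AddMonoidAlgebra.lift R S ℤ ((Units.coeHom S).comp (zpowersHom Sˣ u))

@[simp]
lemma aevalUnit_T (u : Sˣ) (n : ℤ) : aevalUnit u (T n : R[T;T⁻¹]) = ↑(u ^ n) := by
  rw [aevalUnit, T, AddMonoidAlgebra.lift_single, one_smul]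
  rfl

lemma algHom_ext_T_one {f g : R[T;T⁻¹] →ₐ[R] S} (h : f (T 1) = g (T 1)) : f = g :=
  (AddMonoidAlgebra.lift R S ℤ).symm.injective (MonoidHom.ext_mint h)

lemma counitGm_eq_aevalUnit_one (x : R[T;T⁻¹]) : counitGm R x = aevalUnit (1 : Rˣ) x := by
  induction x using AddMonoidAlgebra.induction_linear with
  | zero => simp [counitGm]
  | add x y hx hy =>
    rw [map_add, ← hx, ← hy]
    exact Finsupp.sum_add_index' (by simp) (by intros; rfl)
  | single n r =>
    rw [aevalUnit, AddMonoidAlgebra.lift_single]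
    exact (Finsupp.sum_single_index rfl).trans (by simp)

lemma comulGm_T (n : ℤ) : comulGm R (T n) = T n ⊗ₜ[R] T n := by
  rw [comulGm, T]
  exact (Finsupp.sum_single_index (by simp)).trans (one_smul _ _)

end LaurentPolynomial

lemma AlgHom.convMul_apply_of_comul_eq_tmul_self {R C A : Type*} [CommSemiring R] [Semiring C]
    [Bialgebra R C] [CommSemiring A] [Algebra R A] (f g : WithConv (C →ₐ[R] A)) {x : C}
    (hx : comul (R := R) x = x ⊗ₜ x) : (f * g) x = f x * g x := by
  rw [convMul_apply, hx]
  simp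

lemma Ideal.exists_unit_mul_sq_eq_of_sq_eq_bot {B : Type*} [CommRing B] {I : Ideal B}
    (hI : I ^ 2 = ⊥) (h2 : IsUnit (2 : B)) {u : Bˣ} {a : B} (ha : a - u ∈ I) :
    ∃ s : Bˣ, (s : B) - 1 ∈ I ∧ a * s ^ 2 = u := by
  have mul_eq_zero {x y : B} (hx : x ∈ I) (hy : y ∈ I) : x * y = 0 := by
    have hxy := Ideal.mul_mem_mul hx hy
    rwa [← pow_two, hI, Ideal.mem_bot] at hxy
  obtain ⟨half, hhalf⟩ := h2.exists_right_inv
  -- `(1 + η)² = 1 + 2η` because `η² = 0`, and `η` is chosen so that `a (1 + 2η) = u`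
  set η := -(half * ↑u⁻¹ * (a - u)) with hη
  have hηI : η ∈ I := I.neg_mem (I.mul_mem_left _ ha)
  have hηη : η * η = 0 := mul_eq_zero hηI hηI
  have hηa : (a - u) * η = 0 := mul_eq_zero ha hηI
  refine ⟨⟨1 + η, 1 - η, by linear_combination -hηη, by linear_combination -hηη⟩, by simpa, ?_⟩
  have hu : (u : B) * ↑u⁻¹ = 1 := u.mul_inv
  simp only [hη] at hηη hηa ⊢
  linear_combination a * hηη + 2 * hηa - (a - u) * u * ↑u⁻¹ * hhalf - (a - u) * hu

lemma exists_convMul_apply_eq_of_sub_mem {R H B : Type*} [CommRing R] [CommRing H]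
    [Bialgebra R H] [CommRing B] [Algebra R B] {I : Ideal B}
    (hI : I ^ 2 = ⊥) (h2 : IsUnit (2 : R)) {t : H} (ht : comul (R := R) t = t ⊗ₜ t)
    (d : H →ₐ[R] R[T;T⁻¹]) (hd : ∀ x, counitGm R (d x) = counit (R := R) x) (hdt : d t = T 2)
    (f : WithConv (H →ₐ[R] B)) (u : Bˣ) (hfu : f t - u ∈ I) :
    ∃ ψ : WithConv (H →ₐ[R] B),
      toConv ((Ideal.Quotient.mkₐ R I).comp ψ.ofConv) = 1 ∧ (f * ψ) t = u := by
  have h2B : IsUnit (2 : B) := by simpa only [map_ofNat] using h2.map (algebraMap R B)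
  obtain ⟨s, hs1, hs⟩ := Ideal.exists_unit_mul_sq_eq_of_sq_eq_bot hI h2B hfu
  refine ⟨toConv ((aevalUnit s).comp d), ?_, ?_⟩
  · have hs_mod : (Ideal.Quotient.mkₐ R I).comp (aevalUnit s) =
        (Algebra.ofId R (B ⧸ I)).comp (aevalUnit 1) :=
      algHom_ext_T_one (by simpa using Ideal.Quotient.eq.mpr hs1)
    ext x
    change Ideal.Quotient.mk I (aevalUnit s (d x)) = algebraMap R _ (counit x)
    rw [← hd, counitGm_eq_aevalUnit_one]
    exact congr($hs_mod (d x))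
  · rw [AlgHom.convMul_apply_of_comul_eq_tmul_self _ _ ht]
    simpa [hdt] using hs

theorem Algebra.FormallySmooth.of_factors_squaring {R H : Type*} [CommRing R] [CommRing H]
    [Bialgebra R H] [Algebra R[T;T⁻¹] H] [IsScalarTower R R[T;T⁻¹] H] [FormallySmooth R H]
    (h2 : IsUnit (2 : R))
    (ht : comul (R := R) (algebraMap R[T;T⁻¹] H (T 1))
      = algebraMap R[T;T⁻¹] H (T 1) ⊗ₜ algebraMap R[T;T⁻¹] H (T 1))
    (d : H →ₐ[R] R[T;T⁻¹]) (hd : ∀ x, counitGm R (d x) = counit (R := R) x)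
    (hdt : d (algebraMap R[T;T⁻¹] H (T 1)) = T 2) :
    FormallySmooth R[T;T⁻¹] H := by
  refine .of_comp_surjective fun B _ _ I hI g => ?_
  let : Algebra R B := ((algebraMap R[T;T⁻¹] B).comp (algebraMap R R[T;T⁻¹])).toAlgebra
  have : IsScalarTower R R[T;T⁻¹] B := .of_algebraMap_eq' rfl
  obtain ⟨f, hf⟩ := FormallySmooth.comp_surjective R H I hI (g.restrictScalars R)
  have hft : f (algebraMap R[T;T⁻¹] H (T 1))
      - ((isUnit_T 1).map (algebraMap R[T;T⁻¹] B)).unit ∈ I := by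
    rw [IsUnit.unit_spec, ← Ideal.Quotient.eq]
    exact congr($hf _).trans (g.commutes _)
  obtain ⟨ψ, hψ, hfψ⟩ := exists_convMul_apply_eq_of_sub_mem hI h2 ht d hd hdt (toConv f) _ hft
  have hf'c : (toConv f * ψ).ofConv.comp (IsScalarTower.toAlgHom R R[T;T⁻¹] H) =
      IsScalarTower.toAlgHom R R[T;T⁻¹] B := algHom_ext_T_one hfψ
  have hf' : (Ideal.Quotient.mkₐ R I).comp (toConv f * ψ).ofConv = g.restrictScalars R := by
    rw [AlgHom.comp_convMul_distrib, ofConv_toConv, hf, hψ, mul_one, ofConv_toConv]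
  exact ⟨{ (toConv f * ψ).ofConv with commutes' := fun x => congr($hf'c x) },
    AlgHom.ext fun x => congr($hf' x)⟩

theorem statement15_general (R : Type) [CommRing R] (h2 : IsUnit (2 : R))
    (H : Type) [CommRing H] [HopfAlgebra R H]
    (hGsmooth : Algebra.Smooth R H)
    -- `c : 𝒢 → 𝔾_m`, i.e. a Hopf algebra homomorphism `R[t,t⁻¹] → 𝒪(𝒢) = H`
    (c : AddMonoidAlgebra R ℤ →ₐ[R] H)
    (hc_comul : ∀ x, Coalgebra.comul (R := R) (c x)
        = TensorProduct.map c.toLinearMap c.toLinearMap (comulGm R x))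
    -- `d : 𝔾_m → 𝒢`, i.e. a Hopf algebra homomorphism `H → R[t,t⁻¹]`
    (d : H →ₐ[R] AddMonoidAlgebra R ℤ)
    (hd_counit : ∀ x, counitGm R (d x) = Coalgebra.counit (R := R) x)
    -- `c ∘ d` is the squaring homomorphism `λ ↦ λ²` of `𝔾_m`, whose coordinate ring map
    -- sends `t^n ↦ t^{2n}`
    (hcd : ∀ z : ℤ, d (c (AddMonoidAlgebra.single z (1 : R)))
        = AddMonoidAlgebra.single (2 * z) (1 : R)) :
    -- then `c` is smooth: the ring map `R[t,t⁻¹] → 𝒪(𝒢)` makes `𝒪(𝒢)` a smooth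
    -- `R[t,t⁻¹]`-algebra
    ∀ (inst : Algebra (AddMonoidAlgebra R ℤ) H),
      (∀ x, @algebraMap (AddMonoidAlgebra R ℤ) H _ _ inst x = c x) →
      @Algebra.Smooth (AddMonoidAlgebra R ℤ) _ H _ inst := by
  intro inst hinst
  have : IsScalarTower R (AddMonoidAlgebra R ℤ) H :=
    .of_algebraMap_eq fun r => by rw [hinst]; exact (c.commutes r).symm
  exact
    { formallySmooth := .of_factors_squaring h2
        (by rw [hinst, hc_comul, comulGm_T, TensorProduct.map_tmul]; rfl) d hd_counit
        (by rw [hinst]; exact hcd 1)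
      finitePresentation := .of_restrict_scalars_finitePresentation R _ H }

theorem statement15 (R : Type) [CommRing R] (h2 : IsUnit (2 : R))
    (H : Type) [CommRing H] [HopfAlgebra R H]
    (hGsmooth : Algebra.Smooth R H)
    -- `c : 𝒢 → 𝔾_m`, i.e. a Hopf algebra homomorphism `R[t,t⁻¹] → 𝒪(𝒢) = H`
    (c : AddMonoidAlgebra R ℤ →ₐ[R] H)
    (hc_counit : ∀ x, Coalgebra.counit (R := R) (c x) = counitGm R x)
    (hc_comul : ∀ x, Coalgebra.comul (R := R) (c x)
        = TensorProduct.map c.toLinearMap c.toLinearMap (comulGm R x))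
    -- `d : 𝔾_m → 𝒢`, i.e. a Hopf algebra homomorphism `H → R[t,t⁻¹]`
    (d : H →ₐ[R] AddMonoidAlgebra R ℤ)
    (hd_counit : ∀ x, counitGm R (d x) = Coalgebra.counit (R := R) x)
    (hd_comul : ∀ x, comulGm R (d x)
        = TensorProduct.map d.toLinearMap d.toLinearMap (Coalgebra.comul (R := R) x))
    -- `c ∘ d` is the squaring homomorphism `λ ↦ λ²` of `𝔾_m`, whose coordinate ring map
    -- sends `t^n ↦ t^{2n}`
    (hcd : ∀ z : ℤ, d (c (AddMonoidAlgebra.single z (1 : R)))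
        = AddMonoidAlgebra.single (2 * z) (1 : R)) :
    -- then `c` is smooth: the ring map `R[t,t⁻¹] → 𝒪(𝒢)` makes `𝒪(𝒢)` a smooth
    -- `R[t,t⁻¹]`-algebra
    ∀ (inst : Algebra (AddMonoidAlgebra R ℤ) H),
      (∀ x, @algebraMap (AddMonoidAlgebra R ℤ) H _ _ inst x = c x) →
      @Algebra.Smooth (AddMonoidAlgebra R ℤ) _ H _ inst :=
  statement15_general R h2 H hGsmooth c hc_comul d hd_counit hcd
end
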